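/- Integrating the modified Hamiltonian with the same method and step reproduces the exact flow (concrete instance for the harmonic oscillator): let h ≠ 0 with cos h ≠ 0, and let Ĥ_SE(P,Q) = (sin h·(P² + Q²)/2 + (1 − cos h)·P·Q)/(h·cos h). Then for every (p₀,q₀) ∈ ℝ², the symplectic Euler equations p₁ = p₀ − h·∂Ĥ_SE/∂Q(p₁, q₀), q₁ = q₀ + h·∂Ĥ_SE/∂P(p₁, q₀) have the unique solution p₁ = p₀·cos h − q₀·sin h, q₁ = p₀·sin h + q₀·cos h, i.e. one symplectic Euler step of size h applied to Ĥ_SE equals the exact time-h flow of the harmonic oscillator. -/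

import Mathlib

/-!
Only `h • Ĥ_SE` enters the step, and its gradient is linear, so the implicit equations form a
linear system. The first one involves `p₁` alone and is solved by `p₀ cos h - q₀ sin h`;
substituting this into the second one gives `q₁` after `sin² h + cos² h = 1`.
-/

noncomputable section

/-- The modified Hamiltonian of the symplectic Euler method with step `h` for the
harmonic oscillator. -/
def HSE (h P Q : ℝ) : ℝ :=
  (Real.sin h * (P ^ 2 + Q ^ 2) / 2 + (1 - Real.cos h) * P * Q) / (h * Real.cos h)

open Real

/- At `h = 0` the left side is `0` by the junk value of division by zero, and so is the right
side, since `sin 0 = 1 - cos 0 = 0`. -/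
theorem mul_HSE (h P Q : ℝ) :
    h * HSE h P Q = (sin h * (P ^ 2 + Q ^ 2) / 2 + (1 - cos h) * P * Q) / cos h := by
  rcases eq_or_ne h 0 with rfl | hh
  · simp
  · rw [HSE, ← mul_div_assoc, mul_div_mul_left _ _ hh]

theorem mul_deriv_HSE_snd (h P q : ℝ) :
    h * deriv (fun Q => HSE h P Q) q = (sin h * q + (1 - cos h) * P) / cos h := by
  rw [← deriv_const_mul_field]
  simp only [mul_HSE]
  refine (((((hasDerivAt_pow 2 q).const_add (P ^ 2)).const_mul (sin h)).div_const 2).add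
    ((hasDerivAt_id q).const_mul ((1 - cos h) * P))).div_const (cos h) |>.deriv.trans ?_
  push_cast
  ring

theorem mul_deriv_HSE_fst (h p Q : ℝ) :
    h * deriv (fun P => HSE h P Q) p = (sin h * p + (1 - cos h) * Q) / cos h := by
  rw [← deriv_const_mul_field]
  simp only [mul_HSE]
  refine (((((hasDerivAt_pow 2 p).add_const (Q ^ 2)).const_mul (sin h)).div_const 2).add
    (((hasDerivAt_id p).const_mul (1 - cos h)).mul_const Q)).div_const (cos h) |>.deriv.trans ?_
  push_cast
  ring

section LinearStep

variable {s c p₀ q₀ p₁ : ℝ}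

theorem eq_sub_div_iff_rotate_fst (hc : c ≠ 0) :
    p₁ = p₀ - (s * q₀ + (1 - c) * p₁) / c ↔ p₁ = p₀ * c - q₀ * s := by
  rw [eq_sub_iff_add_eq, ← eq_sub_iff_add_eq', div_eq_iff hc]
  constructor <;> intro h <;> linarith

theorem add_div_eq_rotate_snd (hc : c ≠ 0) (hsc : s ^ 2 + c ^ 2 = 1) :
    q₀ + (s * (p₀ * c - q₀ * s) + (1 - c) * q₀) / c = p₀ * s + q₀ * c := by
  field_simp
  linear_combination (-q₀) * hsc

end LinearStep

theorem stmt10_general (h : ℝ) (hcos : Real.cos h ≠ 0) :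
    ∀ p₀ q₀ p₁ q₁ : ℝ,
      (p₁ = p₀ - h * deriv (fun Q => HSE h p₁ Q) q₀ ∧
        q₁ = q₀ + h * deriv (fun P => HSE h P q₀) p₁) ↔
      (p₁ = p₀ * Real.cos h - q₀ * Real.sin h ∧
        q₁ = p₀ * Real.sin h + q₀ * Real.cos h) := by
  intro p₀ q₀ p₁ q₁
  rw [mul_deriv_HSE_snd, mul_deriv_HSE_fst, eq_sub_div_iff_rotate_fst hcos]
  refine and_congr_right fun hp => ?_
  rw [hp, add_div_eq_rotate_snd hcos (sin_sq_add_cos_sq h)]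

/-- one symplectic Euler step of size `h` applied to the modified
Hamiltonian `Ĥ_SE` equals the exact time-`h` flow of the harmonic oscillator: the
implicit equations `p₁ = p₀ − h·∂Ĥ_SE/∂Q(p₁, q₀)`, `q₁ = q₀ + h·∂Ĥ_SE/∂P(p₁, q₀)` have
the unique solution `(p₁, q₁) = (p₀ cos h − q₀ sin h, p₀ sin h + q₀ cos h)`. -/
theorem stmt10 (h : ℝ) (hh : h ≠ 0) (hcos : Real.cos h ≠ 0) :
    ∀ p₀ q₀ p₁ q₁ : ℝ,
      (p₁ = p₀ - h * deriv (fun Q => HSE h p₁ Q) q₀ ∧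
        q₁ = q₀ + h * deriv (fun P => HSE h P q₀) p₁) ↔
      (p₁ = p₀ * Real.cos h - q₀ * Real.sin h ∧
        q₁ = p₀ * Real.sin h + q₀ * Real.cos h) :=
  stmt10_general h hcos
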